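/- For $0 < t_1 < t_2$ with $t_2 < \pi$, and $n = 0$: $\frac{1}{\pi}\int_0^\pi \log\left(\frac{2}{\sqrt{2(1 - \cos t_1 \cos t_2 - \sin t_1 \sin t_2 \cos\theta)}}\right) d\theta = -\log\left(\cos(t_1/2)\sin(t_2/2)\right)$. -/

import Mathlib

/-!
Halving the angles, `2 (1 - cos t₁ cos t₂ - sin t₁ sin t₂ cos θ) = 4 ‖p e^{iθ} - q‖²` with
`p = cos (t₁/2) sin (t₂/2)` and `q = sin (t₁/2) cos (t₂/2)`, and `|q| ≤ |p|` because
`p² - q² = sin² (t₂/2) - sin² (t₁/2)`. Since `q` lies inside the circle of radius `|p|`, the mean of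
`log ‖z - q‖` over that circle is `log |p|` (Jensen), and as the integrand depends on `θ` only
through `cos θ`, its mean over `[0, π]` is the same.
-/

open Real intervalIntegral MeasureTheory

lemma norm_circleMap_zero_sub_ofReal_sq (p q θ : ℝ) :
    ‖circleMap 0 p θ - q‖ ^ 2 = p ^ 2 - 2 * p * q * cos θ + q ^ 2 := by
  rw [← Complex.normSq_eq_norm_sq, Complex.normSq_apply]
  simp only [circleMap_zero, Complex.sub_re, Complex.sub_im, Complex.re_ofReal_mul,
    Complex.im_ofReal_mul, Complex.exp_ofReal_mul_I_re, Complex.exp_ofReal_mul_I_im,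
    Complex.ofReal_re, Complex.ofReal_im]
  linear_combination p ^ 2 * sin_sq_add_cos_sq θ

lemma integral_comp_cos_zero_two_pi {E : Type*} [NormedAddCommGroup E] [NormedSpace ℝ E]
    {f : ℝ → E} (hf : IntervalIntegrable (fun θ ↦ f (cos θ)) volume 0 π) :
    ∫ θ in 0..2 * π, f (cos θ) = (2 : ℝ) • ∫ θ in 0..π, f (cos θ) := by
  have hreflect : ∀ θ, cos (2 * π - θ) = cos θ := fun θ ↦ by
    rw [cos_sub, cos_two_pi, sin_two_pi]; ring
  have hbounds : 2 * π - π = π := by ring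
  have hf' : IntervalIntegrable (fun θ ↦ f (cos θ)) volume π (2 * π) := by
    simpa only [hreflect, sub_zero, hbounds] using (hf.comp_sub_left (2 * π)).symm
  have hupper : ∫ θ in π..2 * π, f (cos θ) = ∫ θ in 0..π, f (cos θ) := by
    simpa only [hreflect, sub_zero, hbounds] using
      (integral_comp_sub_left (fun θ ↦ f (cos θ)) (a := 0) (b := π) (2 * π)).symm
  rw [← integral_add_adjacent_intervals hf hf', hupper, two_smul]

theorem integral_log_sq_sub_two_mul_mul_cos_add_sq {p q : ℝ} (h : |q| ≤ |p|) :
    ∫ θ in 0..π, log (p ^ 2 - 2 * p * q * cos θ + q ^ 2) = π * log (p ^ 2) := by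
  have hlog : ∀ θ, log (p ^ 2 - 2 * p * q * cos θ + q ^ 2) =
      2 * log ‖circleMap 0 p θ - q‖ := fun θ ↦ by
    rw [← norm_circleMap_zero_sub_ofReal_sq, log_pow, Nat.cast_ofNat]
  have hint : IntervalIntegrable (fun θ ↦ log (p ^ 2 - 2 * p * q * cos θ + q ^ 2)) volume 0 π := by
    simp only [hlog]
    refine ((circleIntegrable_log_norm_sub_const (a := q) (c := 0) p).const_mul 2).mono_set ?_
    rw [Set.uIcc_of_le pi_pos.le, Set.uIcc_of_le two_pi_pos.le]
    exact Set.Icc_subset_Icc_right (by linarith [pi_pos])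
  have havg := circleAverage_log_norm_sub_const_of_mem_closedBall (a := q) (c := 0) (R := p)
    (by simpa using h)
  rw [circleAverage_def, smul_eq_mul] at havg
  calc ∫ θ in 0..π, log (p ^ 2 - 2 * p * q * cos θ + q ^ 2)
      = (1 / 2) * ∫ θ in 0..2 * π, log (p ^ 2 - 2 * p * q * cos θ + q ^ 2) := by
        rw [integral_comp_cos_zero_two_pi (f := fun x ↦ log (p ^ 2 - 2 * p * q * x + q ^ 2)) hint,
          smul_eq_mul]
        ring
    _ = 2 * π * ((2 * π)⁻¹ * ∫ θ in 0..2 * π, log ‖circleMap 0 p θ - q‖) := by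
        simp only [hlog, intervalIntegral.integral_const_mul]
        field_simp
    _ = π * log (p ^ 2) := by
        rw [havg, log_pow]
        push_cast
        ring

lemma two_mul_one_sub_cos_mul_cos_sub_sin_mul_sin_mul_cos (x y θ : ℝ) :
    2 * (1 - cos x * cos y - sin x * sin y * cos θ) =
      4 * ((cos (x / 2) * sin (y / 2)) ^ 2
        - 2 * (cos (x / 2) * sin (y / 2)) * (sin (x / 2) * cos (y / 2)) * cos θ
        + (sin (x / 2) * cos (y / 2)) ^ 2) := by
  obtain ⟨u, rfl⟩ : ∃ u, x = 2 * u := ⟨x / 2, by ring⟩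
  obtain ⟨v, rfl⟩ : ∃ v, y = 2 * v := ⟨y / 2, by ring⟩
  simp only [mul_div_cancel_left₀ _ (two_ne_zero' ℝ), sin_two_mul, cos_two_mul]
  linear_combination (-4 * cos u ^ 2) * sin_sq_add_cos_sq v
    + (-4 * cos v ^ 2) * sin_sq_add_cos_sq u

lemma abs_sin_mul_cos_le_abs_cos_mul_sin {x y : ℝ} (h : |sin x| ≤ |sin y|) :
    |sin x * cos y| ≤ |cos x * sin y| := by
  rw [← sq_le_sq, mul_pow, mul_pow, cos_sq', cos_sq']
  nlinarith [sq_le_sq.mpr h]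

lemma log_two_div_sqrt_four_mul {x : ℝ} (hx : 0 ≤ x) : log (2 / √(4 * x)) = -(log x / 2) := by
  rw [sqrt_mul' _ hx, show √4 = 2 by rw [sqrt_eq_iff_eq_sq] <;> norm_num,
    div_mul_cancel_left₀ two_ne_zero, log_inv, log_sqrt hx]

/-- The `n = 0` azimuthal Fourier mode of the kernel `log (2/|x-x'|)` on the sphere. -/
theorem log_kernel_mode_zero (t₁ t₂ : ℝ) (h0 : 0 < t₁) (h12 : t₁ < t₂) (h2 : t₂ < π) :
    (1 / π) * ∫ θ in (0:ℝ)..π,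
        Real.log (2 / Real.sqrt (2 * (1 - Real.cos t₁ * Real.cos t₂
          - Real.sin t₁ * Real.sin t₂ * Real.cos θ)))
      = -Real.log (Real.cos (t₁ / 2) * Real.sin (t₂ / 2)) := by
  set p := cos (t₁ / 2) * sin (t₂ / 2)
  set q := sin (t₁ / 2) * cos (t₂ / 2)
  have hsin : |sin (t₁ / 2)| ≤ |sin (t₂ / 2)| := by
    rw [abs_of_nonneg (sin_nonneg_of_nonneg_of_le_pi (by linarith) (by linarith)),
      abs_of_nonneg (sin_nonneg_of_nonneg_of_le_pi (by linarith) (by linarith))]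
    exact sin_le_sin_of_le_of_le_pi_div_two (by linarith) (by linarith) (by linarith)
  have hintegrand : ∀ θ, log (2 / √(2 * (1 - cos t₁ * cos t₂ - sin t₁ * sin t₂ * cos θ))) =
      -(1 / 2) * log (p ^ 2 - 2 * p * q * cos θ + q ^ 2) := fun θ ↦ by
    rw [two_mul_one_sub_cos_mul_cos_sub_sin_mul_sin_mul_cos, log_two_div_sqrt_four_mul
      (norm_circleMap_zero_sub_ofReal_sq p q θ ▸ sq_nonneg _)]
    ring
  have hqp : |q| ≤ |p| := abs_sin_mul_cos_le_abs_cos_mul_sin hsin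
  simp only [hintegrand]
  rw [intervalIntegral.integral_const_mul, integral_log_sq_sub_two_mul_mul_cos_add_sq hqp, log_pow]
  field_simp
  ring
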